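/- (Complete overdamping) Assume θ = 0 and that R has full rank (R is invertible). If β ≥ 2·ω_max/b_min, then every eigenvalue of the system operator is purely imaginary: for every ζ ∈ σ(A(β)) (equivalently every ζ ∈ ℂ with det C(ζ,β) = 0) one has Re ζ = 0. -/

import Mathlib

/-!
If `(p, q)` is an eigenvector of `A(β)` for `ζ ≠ 0`, then `ζ q = iΦp` forces `p ≠ 0`, and pairing
the first block row with `p` (using that `Φ` is real, so `Φᵀ = Φᴴ`) gives the scalar quadratic
`‖p‖² ζ² + iβ (p* R̃ p) ζ − ‖Φp‖² = 0` with real coefficients. A root `ζ` of `det C(·,β)` with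
`C(ζ,β) x = 0` gives the same quadratic for `p = √α x`. Since `Φp` is a block of `Ω (p, 0)`,
`‖Φp‖ ≤ ω_max ‖p‖`; since `b_min` is the least eigenvalue of `R̃`, `p* R̃ p ≥ b_min ‖p‖²`. Hence
`β ≥ 2 ω_max / b_min` makes the discriminant `4 ‖p‖² ‖Φp‖² − β² (p* R̃ p)²` nonpositive, and both
roots of the quadratic lie on the imaginary axis.
-/

open Matrix
open scoped ComplexOrder

noncomputable section

variable {N : ℕ}

/-- A real matrix viewed as a complex matrix. -/
def cm (M : Matrix (Fin N) (Fin N) ℝ) : Matrix (Fin N) (Fin N) ℂ :=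
  M.map Complex.ofReal

/-- The quadratic matrix pencil `C(ζ,β) = ζ²α + iζ(2θ + βR) − η`. -/
def pencil (α η θ R : Matrix (Fin N) (Fin N) ℝ) (β : ℝ) (ζ : ℂ) :
    Matrix (Fin N) (Fin N) ℂ :=
  ζ ^ 2 • cm α + (Complex.I * ζ) • ((2 : ℂ) • cm θ + (β : ℂ) • cm R) - cm η

/-- The square root of a positive semidefinite matrix (removed from Mathlib; old definition). -/
def Matrix.PosSemidef.sqrt {n : Type*} [Fintype n] [DecidableEq n] {A : Matrix n n ℂ}
    (hA : A.PosSemidef) : Matrix n n ℂ :=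
  hA.isHermitian.eigenvectorUnitary.1 * diagonal ((↑) ∘ (√·) ∘ hA.isHermitian.eigenvalues) *
    (star hA.isHermitian.eigenvectorUnitary : Matrix n n ℂ)

/-- `K_p = (√α)⁻¹`. -/
def Kp {α : Matrix (Fin N) (Fin N) ℝ} (hα : (cm α).PosDef) : Matrix (Fin N) (Fin N) ℂ :=
  (hα.posSemidef.sqrt)⁻¹

/-- `Φ = √η · K_p`. -/
def Phi {α η : Matrix (Fin N) (Fin N) ℝ} (hα : (cm α).PosDef) (hη : (cm η).PosSemidef) :
    Matrix (Fin N) (Fin N) ℂ :=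
  hη.sqrt * Kp hα

/-- `R̃ = K_p R K_p`. -/
def Rt (R : Matrix (Fin N) (Fin N) ℝ) {α : Matrix (Fin N) (Fin N) ℝ} (hα : (cm α).PosDef) :
    Matrix (Fin N) (Fin N) ℂ :=
  Kp hα * cm R * Kp hα

/-- `Ω_p = −2i K_p θ K_p`. -/
def Omp (θ : Matrix (Fin N) (Fin N) ℝ) {α : Matrix (Fin N) (Fin N) ℝ} (hα : (cm α).PosDef) :
    Matrix (Fin N) (Fin N) ℂ :=
  ((-2 : ℂ) * Complex.I) • (Kp hα * cm θ * Kp hα)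

/-- `Ω = [[Ω_p, −iΦᵀ],[iΦ, 0]]`. -/
def Om (θ : Matrix (Fin N) (Fin N) ℝ) {α η : Matrix (Fin N) (Fin N) ℝ}
    (hα : (cm α).PosDef) (hη : (cm η).PosSemidef) :
    Matrix (Fin N ⊕ Fin N) (Fin N ⊕ Fin N) ℂ :=
  fromBlocks (Omp θ hα) ((-Complex.I) • (Phi hα hη)ᵀ) (Complex.I • Phi hα hη) 0

/-- `B = [[R̃, 0],[0, 0]]`. -/
def Bm (R : Matrix (Fin N) (Fin N) ℝ) {α : Matrix (Fin N) (Fin N) ℝ} (hα : (cm α).PosDef) :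
    Matrix (Fin N ⊕ Fin N) (Fin N ⊕ Fin N) ℂ :=
  fromBlocks (Rt R hα) 0 0 0

/-- The system operator `A(β) = Ω − iβB`. -/
def Asys (θ R : Matrix (Fin N) (Fin N) ℝ) {α η : Matrix (Fin N) (Fin N) ℝ}
    (hα : (cm α).PosDef) (hη : (cm η).PosSemidef) (β : ℝ) :
    Matrix (Fin N ⊕ Fin N) (Fin N ⊕ Fin N) ℂ :=
  Om θ hα hη - (Complex.I * (β : ℂ)) • Bm R hα

/-- The ℓ²→ℓ² operator norm of a complex matrix. -/
def opN {n : Type*} [Fintype n] [DecidableEq n] (M : Matrix n n ℂ) : ℝ :=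
  ‖Matrix.toEuclideanCLM (𝕜 := ℂ) M‖

/-- `ω_max = ‖Ω‖`. -/
def omegaMax (θ : Matrix (Fin N) (Fin N) ℝ) {α η : Matrix (Fin N) (Fin N) ℝ}
    (hα : (cm α).PosDef) (hη : (cm η).PosSemidef) : ℝ :=
  opN (Om θ hα hη)

/-- `b_min`, the smallest nonzero eigenvalue of `B`. -/
def bMin (R : Matrix (Fin N) (Fin N) ℝ) {α : Matrix (Fin N) (Fin N) ℝ} (hα : (cm α).PosDef) : ℝ :=
  sInf {r : ℝ | r ≠ 0 ∧ (r : ℂ) ∈ spectrum ℂ (Bm R hα)}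

namespace Matrix

lemma dotProduct_conjTranspose_mulVec {R m n : Type*} [CommSemiring R] [StarRing R]
    [Fintype m] [Fintype n] (A : Matrix m n R) (x : n → R) (y : m → R) :
    star x ⬝ᵥ Aᴴ *ᵥ y = star (A *ᵥ x) ⬝ᵥ y := by
  rw [dotProduct_mulVec, star_mulVec]

lemma mem_spectrum_fromBlocks_zero_iff {K m n : Type*} [Field K] [Fintype m] [Fintype n]
    [DecidableEq m] [DecidableEq n] {A : Matrix m m K} {z : K} (hz : z ≠ 0) :
    z ∈ spectrum K (fromBlocks A 0 0 (0 : Matrix n n K)) ↔ z ∈ spectrum K A := by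
  have hblocks : algebraMap K _ z - fromBlocks A 0 0 (0 : Matrix n n K) =
      fromBlocks (algebraMap K _ z - A) 0 0 (algebraMap K _ z) := by
    ext (i | i) (j | j) <;> simp [algebraMap_eq_diagonal, diagonal_apply]
  rw [spectrum.mem_iff, spectrum.mem_iff, hblocks, isUnit_iff_isUnit_det, isUnit_iff_isUnit_det,
    det_fromBlocks_zero₁₂, IsUnit.mul_iff]
  simp [hz, Algebra.algebraMap_eq_smul_one]

lemma exists_mulVec_eq_smul_of_mem_spectrum {K n : Type*} [Field K] [Fintype n]
    [DecidableEq n] {M : Matrix n n K} {ζ : K} (hζ : ζ ∈ spectrum K M) :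
    ∃ v ≠ 0, M *ᵥ v = ζ • v := by
  rw [← spectrum_toLin'] at hζ
  obtain ⟨v, hv⟩ := (Module.End.hasEigenvalue_iff_mem_spectrum.mpr hζ).exists_hasEigenvector
  exact ⟨v, hv.2, hv.apply_eq_smul⟩

variable {n : Type*} [Fintype n] [DecidableEq n]

open scoped MatrixOrder in
lemma IsHermitian.sInf_spectrum_mul_le {M : Matrix n n ℂ} (hM : M.IsHermitian) (v : n → ℂ) :
    sInf (spectrum ℝ M) * (star v ⬝ᵥ v).re ≤ (star v ⬝ᵥ M *ᵥ v).re := by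
  have hle : algebraMap ℝ _ (sInf (spectrum ℝ M)) ≤ M :=
    (algebraMap_le_iff_le_spectrum hM.isSelfAdjoint).mpr fun _ hx ↦
      csInf_le M.finite_real_spectrum.bddBelow hx
  have h := (Complex.nonneg_iff.mp ((sub_nonneg.mpr hle).posSemidef.dotProduct_mulVec_nonneg v)).1
  rw [sub_mulVec, dotProduct_sub, Algebra.algebraMap_eq_smul_one, smul_mulVec, one_mulVec,
    dotProduct_smul, Complex.sub_re, Complex.real_smul, Complex.re_ofReal_mul] at h
  linarith

lemma PosDef.pos_of_mem_spectrum {M : Matrix n n ℂ} (hM : M.PosDef) {r : ℝ}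
    (hr : r ∈ spectrum ℝ M) : 0 < r := by
  obtain ⟨i, rfl⟩ := hM.1.spectrum_real_eq_range_eigenvalues ▸ hr
  exact hM.eigenvalues_pos i

lemma PosDef.sInf_spectrum_pos [Nonempty n] {M : Matrix n n ℂ} (hM : M.PosDef) :
    0 < sInf (spectrum ℝ M) := by
  have hne : (spectrum ℝ M).Nonempty := by
    rw [hM.1.spectrum_real_eq_range_eigenvalues]
    exact Set.range_nonempty _
  exact hM.pos_of_mem_spectrum (hne.csInf_mem M.finite_real_spectrum)

namespace PosSemidef

open scoped MatrixOrder

variable {A : Matrix n n ℂ}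

lemma sqrt_eq_cfcSqrt (hA : A.PosSemidef) : hA.sqrt = CFC.sqrt A := by
  rw [CFC.sqrt_eq_cfc, cfc_nnreal_eq_real _ A, hA.1.cfc_eq]
  simp only [IsHermitian.cfc, Unitary.conjStarAlgAut_apply, Matrix.PosSemidef.sqrt]
  congr 3
  funext i
  simp [Real.coe_sqrt, Real.coe_toNNReal', max_eq_left (hA.eigenvalues_nonneg i)]

lemma posSemidef_sqrt (hA : A.PosSemidef) : hA.sqrt.PosSemidef := by
  rw [hA.sqrt_eq_cfcSqrt]
  exact (CFC.sqrt_nonneg A).posSemidef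

lemma sqrt_mul_self (hA : A.PosSemidef) : hA.sqrt * hA.sqrt = A := by
  rw [hA.sqrt_eq_cfcSqrt]
  exact CFC.sqrt_mul_sqrt_self A hA.nonneg

lemma transpose_sqrt (hA : A.PosSemidef) (hAT : Aᵀ = A) : hA.sqrtᵀ = hA.sqrt := by
  refine (CFC.sqrt_unique ?_ hA.posSemidef_sqrt.transpose.nonneg).symm.trans
    hA.sqrt_eq_cfcSqrt.symm
  rw [← transpose_mul, hA.sqrt_mul_self, hAT]

lemma star_dotProduct_mulVec_eq_sqrt (hA : A.PosSemidef) (x : n → ℂ) :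
    star x ⬝ᵥ A *ᵥ x = star (hA.sqrt *ᵥ x) ⬝ᵥ hA.sqrt *ᵥ x := by
  conv_lhs => rw [← hA.sqrt_mul_self, ← mulVec_mulVec]
  rw [dotProduct_mulVec, star_mulVec, hA.posSemidef_sqrt.1.eq]

lemma isUnit_sqrt (hA : A.PosDef) : IsUnit hA.posSemidef.sqrt :=
  isUnit_of_mul_isUnit_left (hA.posSemidef.sqrt_mul_self ▸ hA.isUnit)

end PosSemidef

end Matrix

lemma star_dotProduct_self_eq_norm_sq {n : Type*} [Fintype n] (v : n → ℂ) :
    star v ⬝ᵥ v = ((‖WithLp.toLp 2 v‖ ^ 2 : ℝ) : ℂ) := by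
  rw [dotProduct_comm, ← EuclideanSpace.inner_toLp_toLp, inner_self_eq_norm_sq_to_K]
  push_cast
  rfl

lemma norm_sq_toLp_sumElim {𝕜 m n : Type*} [RCLike 𝕜] [Fintype m] [Fintype n] (p : m → 𝕜)
    (q : n → 𝕜) :
    ‖WithLp.toLp 2 (Sum.elim p q)‖ ^ 2 = ‖WithLp.toLp 2 p‖ ^ 2 + ‖WithLp.toLp 2 q‖ ^ 2 := by
  simp only [EuclideanSpace.norm_sq_eq, Fintype.sum_sum_type]
  rfl

lemma Complex.re_eq_zero_of_quadratic {a b c : ℝ} (ha : 0 < a) (hd : 4 * a * c ≤ b ^ 2)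
    {ζ : ℂ} (hζ : a * ζ ^ 2 + Complex.I * b * ζ - c = 0) : ζ.re = 0 := by
  have hre := congrArg Complex.re hζ
  have him := congrArg Complex.im hζ
  simp only [sq, Complex.sub_re, Complex.add_re, Complex.mul_re, Complex.mul_im, Complex.sub_im,
    Complex.add_im, Complex.ofReal_re, Complex.ofReal_im, Complex.I_re, Complex.I_im,
    Complex.zero_re, Complex.zero_im] at hre him
  by_contra hx
  have hy : b = -(2 * a * ζ.im) := by
    have : ζ.re * (2 * a * ζ.im + b) = 0 := by linear_combination him
    linarith [(mul_eq_zero.mp this).resolve_left hx]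
  have : 4 * a ^ 2 * ζ.re ^ 2 = 4 * a * c - b ^ 2 := by
    linear_combination 4 * a * hre + (b + 2 * a * ζ.im) * hy
  have hpos : 0 < 4 * a ^ 2 * ζ.re ^ 2 := by
    have := sq_pos_of_ne_zero hx
    positivity
  linarith

lemma cm_zero : cm (0 : Matrix (Fin N) (Fin N) ℝ) = 0 :=
  Matrix.map_zero _ Complex.ofReal_zero

lemma transpose_cm_of_isHermitian {M : Matrix (Fin N) (Fin N) ℝ} (hM : (cm M).IsHermitian) :
    (cm M)ᵀ = cm M := by
  ext i j
  simpa [cm] using hM.apply i j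

section Overdamping

variable {α η R : Matrix (Fin N) (Fin N) ℝ} (hα : (cm α).PosDef) (hη : (cm η).PosSemidef)

lemma Kp_mul_sqrt : Kp hα * hα.posSemidef.sqrt = 1 :=
  nonsing_inv_mul _ ((isUnit_iff_isUnit_det _).mp (PosSemidef.isUnit_sqrt hα))

lemma isUnit_Kp : IsUnit (Kp hα) :=
  isUnit_nonsing_inv_iff.mpr (PosSemidef.isUnit_sqrt hα)

lemma Kp_isHermitian : (Kp hα).IsHermitian := by
  rw [Kp, IsHermitian, conjTranspose_nonsing_inv, hα.posSemidef.posSemidef_sqrt.1.eq]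

lemma transpose_Kp : (Kp hα)ᵀ = Kp hα := by
  rw [Kp, transpose_nonsing_inv,
    hα.posSemidef.transpose_sqrt (transpose_cm_of_isHermitian hα.1)]

lemma transpose_Phi : (Phi hα hη)ᵀ = (Phi hα hη)ᴴ := by
  rw [Phi, transpose_mul, conjTranspose_mul, transpose_Kp, (Kp_isHermitian hα).eq,
    hη.transpose_sqrt (transpose_cm_of_isHermitian hη.1), hη.posSemidef_sqrt.1.eq]

lemma Rt_posDef (hR : (cm R).PosDef) : (Rt R hα).PosDef := by
  have h := hR.conjTranspose_mul_mul_same (mulVec_injective_iff_isUnit.mpr (isUnit_Kp hα))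
  rwa [(Kp_isHermitian hα).eq] at h

lemma bMin_eq_sInf_spectrum (hR : (cm R).PosDef) :
    bMin R hα = sInf (spectrum ℝ (Rt R hα)) := by
  rw [bMin]
  congr 1
  ext r
  constructor
  · rintro ⟨hr, hmem⟩
    rwa [Bm, mem_spectrum_fromBlocks_zero_iff (Complex.ofReal_ne_zero.mpr hr),
      ← Complex.coe_algebraMap, spectrum.algebraMap_mem_iff] at hmem
  · intro hmem
    have hr := ((Rt_posDef hα hR).pos_of_mem_spectrum hmem).ne'
    refine ⟨hr, ?_⟩
    rwa [Bm, mem_spectrum_fromBlocks_zero_iff (Complex.ofReal_ne_zero.mpr hr),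
      ← Complex.coe_algebraMap, spectrum.algebraMap_mem_iff]

lemma Om_zero_mulVec_sumElim (p q : Fin N → ℂ) :
    Om 0 hα hη *ᵥ Sum.elim p q =
      Sum.elim ((-Complex.I) • ((Phi hα hη)ᵀ *ᵥ q)) (Complex.I • (Phi hα hη *ᵥ p)) := by
  simp [Om, Omp, cm_zero, fromBlocks_mulVec, smul_mulVec, neg_mulVec]

lemma Asys_zero_mulVec_sumElim_eq_smul_iff {β : ℝ} {ζ : ℂ} {p q : Fin N → ℂ} :
    Asys 0 R hα hη β *ᵥ Sum.elim p q = ζ • Sum.elim p q ↔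
      (-Complex.I) • ((Phi hα hη)ᵀ *ᵥ q) - (Complex.I * β) • (Rt R hα *ᵥ p) = ζ • p ∧
        Complex.I • (Phi hα hη *ᵥ p) = ζ • q := by
  have hAv : Asys 0 R hα hη β *ᵥ Sum.elim p q =
      Sum.elim ((-Complex.I) • ((Phi hα hη)ᵀ *ᵥ q) - (Complex.I * β) • (Rt R hα *ᵥ p))
        (Complex.I • (Phi hα hη *ᵥ p)) := by
    rw [Asys, sub_mulVec, Om_zero_mulVec_sumElim, smul_mulVec, Bm, fromBlocks_mulVec]
    ext (i | i) <;> simp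
  have hζv : ζ • Sum.elim p q = Sum.elim (ζ • p) (ζ • q) := by ext (i | i) <;> rfl
  rw [hAv, hζv, Sum.elim_eq_iff]

lemma norm_sq_Phi_mulVec_le (p : Fin N → ℂ) :
    ‖WithLp.toLp 2 (Phi hα hη *ᵥ p)‖ ^ 2 ≤ omegaMax 0 hα hη ^ 2 * ‖WithLp.toLp 2 p‖ ^ 2 := by
  have h := (toEuclideanCLM (𝕜 := ℂ) (Om 0 hα hη)).le_opNorm (WithLp.toLp 2 (Sum.elim p 0))
  rw [toEuclideanCLM_toLp, Om_zero_mulVec_sumElim] at h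
  replace h := mul_pow (M := ℝ) _ _ 2 ▸ pow_le_pow_left₀ (norm_nonneg _) h 2
  simpa [norm_sq_toLp_sumElim, norm_smul, omegaMax, opN] using h

/-- `p* K_p C(ζ,β) K_p p` for `θ = 0`, since `K_p C(ζ,β) K_p = ζ² + iζβR̃ − Φᴴ Φ`. -/
def pencilForm (R : Matrix (Fin N) (Fin N) ℝ) (β : ℝ) (p : Fin N → ℂ) (ζ : ℂ) : ℂ :=
  ζ ^ 2 * (star p ⬝ᵥ p) + Complex.I * ζ * (β * (star p ⬝ᵥ Rt R hα *ᵥ p)) -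
    star (Phi hα hη *ᵥ p) ⬝ᵥ (Phi hα hη *ᵥ p)

lemma re_eq_zero_of_pencilForm_eq_zero (hR : (cm R).PosDef) {β : ℝ}
    (hβ : 2 * omegaMax 0 hα hη / bMin R hα ≤ β) {p : Fin N → ℂ} (hp : p ≠ 0) {ζ : ℂ}
    (hζ : pencilForm hα hη R β p ζ = 0) : ζ.re = 0 := by
  have : Nonempty (Fin N) := ⟨(Function.ne_iff.mp hp).choose⟩
  set a := ‖WithLp.toLp 2 p‖ ^ 2
  set c := ‖WithLp.toLp 2 (Phi hα hη *ᵥ p)‖ ^ 2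
  set r := (star p ⬝ᵥ Rt R hα *ᵥ p).re
  have hRt := Rt_posDef hα hR
  have hr : star p ⬝ᵥ Rt R hα *ᵥ p = r :=
    Complex.ext rfl (by simpa using hRt.1.im_star_dotProduct_mulVec_self p)
  have ha : 0 < a := pow_pos (norm_pos_iff.mpr (by simpa using hp)) 2
  have hb : 0 < bMin R hα := bMin_eq_sInf_spectrum hα hR ▸ hRt.sInf_spectrum_pos
  have hbr : bMin R hα * a ≤ r := by
    have h := hRt.1.sInf_spectrum_mul_le p
    rwa [star_dotProduct_self_eq_norm_sq, Complex.ofReal_re, ← bMin_eq_sInf_spectrum hα hR] at h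
  have hω : 0 ≤ omegaMax 0 hα hη := norm_nonneg _
  have hωβ : 2 * omegaMax 0 hα hη ≤ β * bMin R hα := (div_le_iff₀ hb).mp hβ
  have hβ0 : 0 ≤ β := nonneg_of_mul_nonneg_left (by linarith) hb
  refine Complex.re_eq_zero_of_quadratic ha (b := β * r) (c := c) ?_ ?_
  · calc 4 * a * c ≤ 4 * a * (omegaMax 0 hα hη ^ 2 * a) := by
          gcongr; exact norm_sq_Phi_mulVec_le hα hη p
      _ = (2 * omegaMax 0 hα hη * a) ^ 2 := by ring
      _ ≤ (β * bMin R hα * a) ^ 2 := by gcongr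
      _ ≤ (β * r) ^ 2 := by rw [mul_assoc]; gcongr
  · rw [pencilForm, hr, star_dotProduct_self_eq_norm_sq, star_dotProduct_self_eq_norm_sq] at hζ
    rw [Complex.ofReal_mul]
    linear_combination hζ

lemma pencilForm_eq_zero_of_Asys_mulVec_eq_smul {β : ℝ} {ζ : ℂ} {p q : Fin N → ℂ}
    (hv : Asys 0 R hα hη β *ᵥ Sum.elim p q = ζ • Sum.elim p q) :
    pencilForm hα hη R β p ζ = 0 := by
  obtain ⟨hp, hq⟩ := (Asys_zero_mulVec_sumElim_eq_smul_iff hα hη).mp hv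
  have hpp := congrArg (star p ⬝ᵥ ·) hp
  have hqq := congrArg (star (Phi hα hη *ᵥ p) ⬝ᵥ ·) hq
  simp only [dotProduct_sub, dotProduct_smul, smul_eq_mul, transpose_Phi,
    dotProduct_conjTranspose_mulVec] at hpp hqq
  rw [pencilForm]
  linear_combination (-ζ) * hpp + Complex.I * hqq -
    (star (Phi hα hη *ᵥ p) ⬝ᵥ Phi hα hη *ᵥ p) * Complex.I_sq

lemma exists_pencilForm_eq_zero_of_mem_spectrum {β : ℝ} {ζ : ℂ}
    (hζ : ζ ∈ spectrum ℂ (Asys 0 R hα hη β)) (hζ0 : ζ ≠ 0) :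
    ∃ p ≠ 0, pencilForm hα hη R β p ζ = 0 := by
  obtain ⟨v, hv0, hv⟩ := exists_mulVec_eq_smul_of_mem_spectrum hζ
  rw [← Sum.elim_comp_inl_inr v] at hv hv0
  refine ⟨v ∘ Sum.inl, fun hp ↦ hv0 ?_, pencilForm_eq_zero_of_Asys_mulVec_eq_smul hα hη hv⟩
  have hq := ((Asys_zero_mulVec_sumElim_eq_smul_iff hα hη).mp hv).2
  rw [hp, mulVec_zero, smul_zero, eq_comm, smul_eq_zero_iff_right hζ0] at hq
  rw [hp, hq]
  ext (i | i) <;> rfl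

lemma exists_pencilForm_eq_zero_of_det_eq_zero {β : ℝ} {ζ : ℂ}
    (hζ : (pencil α η 0 R β ζ).det = 0) : ∃ p ≠ 0, pencilForm hα hη R β p ζ = 0 := by
  obtain ⟨x, hx0, hx⟩ := exists_mulVec_eq_zero_iff.mpr hζ
  set S := hα.posSemidef.sqrt
  have hKp : Kp hα *ᵥ (S *ᵥ x) = x := by rw [mulVec_mulVec, Kp_mul_sqrt, one_mulVec]
  refine ⟨S *ᵥ x, fun h ↦ hx0 (by rw [← hKp, h, mulVec_zero]), ?_⟩
  have hαx : star x ⬝ᵥ cm α *ᵥ x = star (S *ᵥ x) ⬝ᵥ S *ᵥ x :=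
    hα.posSemidef.star_dotProduct_mulVec_eq_sqrt x
  have hηx : star x ⬝ᵥ cm η *ᵥ x =
      star (Phi hα hη *ᵥ (S *ᵥ x)) ⬝ᵥ Phi hα hη *ᵥ (S *ᵥ x) := by
    rw [Phi, ← mulVec_mulVec, hKp]
    exact hη.star_dotProduct_mulVec_eq_sqrt x
  have hRx : star x ⬝ᵥ cm R *ᵥ x = star (S *ᵥ x) ⬝ᵥ Rt R hα *ᵥ (S *ᵥ x) := by
    rw [Rt, ← mulVec_mulVec, ← mulVec_mulVec, hKp, ← (Kp_isHermitian hα).eq,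
      dotProduct_conjTranspose_mulVec, hKp]
  have h := congrArg (star x ⬝ᵥ ·) hx
  simp only [pencil, cm_zero, smul_zero, zero_add, add_mulVec, sub_mulVec,
    smul_mulVec, dotProduct_add, dotProduct_sub, dotProduct_smul, smul_eq_mul,
    dotProduct_zero] at h
  rw [pencilForm, ← hαx, ← hηx, ← hRx]
  linear_combination h

end Overdamping

theorem complete_overdamping_general
    {N : ℕ}
    (α η R : Matrix (Fin N) (Fin N) ℝ)
    (hα : (cm α).PosDef) (hη : (cm η).PosSemidef)
    (hR : (cm R).PosDef)
    (β : ℝ) (hβ : 2 * omegaMax 0 hα hη / bMin R hα ≤ β) :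
    (∀ ζ ∈ spectrum ℂ (Asys 0 R hα hη β), ζ.re = 0) ∧
    (∀ ζ : ℂ, (pencil α η 0 R β ζ).det = 0 → ζ.re = 0) := by
  refine ⟨fun ζ hζ ↦ ?_, fun ζ hζ ↦ ?_⟩
  · rcases eq_or_ne ζ 0 with rfl | hζ0
    · rfl
    obtain ⟨p, hp, hpζ⟩ := exists_pencilForm_eq_zero_of_mem_spectrum hα hη hζ hζ0
    exact re_eq_zero_of_pencilForm_eq_zero hα hη hR hβ hp hpζ
  · obtain ⟨p, hp, hpζ⟩ := exists_pencilForm_eq_zero_of_det_eq_zero hα hη hζ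
    exact re_eq_zero_of_pencilForm_eq_zero hα hη hR hβ hp hpζ

/-- **Complete overdamping** (`θ = 0`, `R` of full rank). If `β ≥ 2 ω_max / b_min` then every
eigenvalue of the system operator `A(β)` (equivalently, every root of `det C(·,β)`) is
purely imaginary. -/
theorem complete_overdamping
    {N : ℕ} (hN : 1 ≤ N)
    (α η R : Matrix (Fin N) (Fin N) ℝ)
    (hα : (cm α).PosDef) (hη : (cm η).PosSemidef)
    (hR : (cm R).PosDef)
    (β : ℝ) (hβ : 2 * omegaMax 0 hα hη / bMin R hα ≤ β) :
    (∀ ζ ∈ spectrum ℂ (Asys 0 R hα hη β), ζ.re = 0) ∧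
    (∀ ζ : ℂ, (pencil α η 0 R β ζ).det = 0 → ζ.re = 0) :=
  complete_overdamping_general α η R hα hη hR β hβ
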